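/- arXiv:0905.1296 — 7 statements merged into one kernel-verified Lean document; each statement's English description precedes it below -/
import Mathlib

section
/- Let M = M₁ ⊗̄ M₂ be the von Neumann tensor product of von Neumann algebras M₁ and M₂, and let ν be a bounded (not necessarily normal) linear functional on M₁. Then there is a unique bounded linear map ν ⊗_M id₂ : M → M₂ satisfying φ ∘ (ν ⊗_M id₂) = ν ∘ (id₁ ⊗̄ φ) for all normal functionals φ on M₂, and its norm equals ‖ν‖. -/
/-!
For `x ∈ M` the functional `φ ↦ ν ((id₁ ⊗̄ φ) x)` on the predual has norm at most `‖ν‖ ‖x‖`, so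
through the duality `M₂ ≃ (M₂)_*^*` it is an element of `M₂`; this defines the slice map, bounds
its norm by `‖ν‖`, and makes it unique because the predual separates `M₂`. It sends `a ⊗ b` to
`ν a • b`, and testing on such tensors with a fixed `b ≠ 0` gives the reverse inequality.
-/

open ContinuousLinearMap

section TomiyamaSlice

variable {𝕜 M M₁ M₂ E : Type*} [NontriviallyNormedField 𝕜]
  [NormedAddCommGroup M] [NormedSpace 𝕜 M] [NormedAddCommGroup M₁] [NormedSpace 𝕜 M₁]
  [NormedAddCommGroup M₂] [NormedSpace 𝕜 M₂] [NormedAddCommGroup E] [NormedSpace 𝕜 E]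

/-- The paper's `ν ⊗_M id₂`, for the duality `J : M₂ ≃ E*` and slice maps `S φ = id₁ ⊗̄ φ`. -/
noncomputable def tomiyamaSlice (J : M₂ ≃ₗᵢ[𝕜] StrongDual 𝕜 E) (S : E →L[𝕜] M →L[𝕜] M₁)
    (ν : M₁ →L[𝕜] 𝕜) : M →L[𝕜] M₂ :=
  J.symm.toLinearIsometry.toContinuousLinearMap ∘L (compL 𝕜 M M₁ 𝕜 ν ∘L S).flip

variable (J : M₂ ≃ₗᵢ[𝕜] StrongDual 𝕜 E) (S : E →L[𝕜] M →L[𝕜] M₁) (ν : M₁ →L[𝕜] 𝕜)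

@[simp]
theorem apply_tomiyamaSlice_apply (φ : E) (x : M) : J (tomiyamaSlice J S ν x) φ = ν (S φ x) := by
  simp [tomiyamaSlice]

theorem eq_tomiyamaSlice_of_apply {T : M →L[𝕜] M₂} (hT : ∀ φ x, J (T x) φ = ν (S φ x)) :
    T = tomiyamaSlice J S ν := by
  ext x
  apply J.injective
  ext φ
  rw [hT, apply_tomiyamaSlice_apply]

theorem norm_tomiyamaSlice_le : ‖tomiyamaSlice J S ν‖ ≤ ‖ν‖ * ‖S‖ := by
  have hν : ‖compL 𝕜 M M₁ 𝕜 ν‖ ≤ ‖ν‖ :=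
    opNorm_le_bound _ (norm_nonneg ν) fun g ↦ by simpa using opNorm_comp_le ν g
  calc ‖tomiyamaSlice J S ν‖
      ≤ ‖J.symm.toLinearIsometry.toContinuousLinearMap‖ * ‖(compL 𝕜 M M₁ 𝕜 ν ∘L S).flip‖ :=
        opNorm_comp_le _ _
    _ ≤ 1 * (‖ν‖ * ‖S‖) := by
        gcongr
        · exact J.symm.toLinearIsometry.norm_toContinuousLinearMap_le
        · exact (opNorm_flip _).trans_le ((opNorm_comp_le _ _).trans (by gcongr))
    _ = ‖ν‖ * ‖S‖ := one_mul _

theorem tomiyamaSlice_apply_tmul {tp : M₁ →ₗ[𝕜] M₂ →ₗ[𝕜] M}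
    (htp : ∀ φ a b, S φ (tp a b) = J b φ • a) (a : M₁) (b : M₂) :
    tomiyamaSlice J S ν (tp a b) = ν a • b := by
  apply J.injective
  ext φ
  simp [htp, mul_comm]

end TomiyamaSlice

theorem norm_le_of_apply_tmul {𝕜 M M₁ M₂ : Type*} [NontriviallyNormedField 𝕜]
    [NormedAddCommGroup M] [NormedSpace 𝕜 M] [NormedAddCommGroup M₁] [NormedSpace 𝕜 M₁]
    [NormedAddCommGroup M₂] [NormedSpace 𝕜 M₂] [Nontrivial M₂]
    {tp : M₁ →ₗ[𝕜] M₂ →ₗ[𝕜] M} (htp : ∀ a b, ‖tp a b‖ ≤ ‖a‖ * ‖b‖)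
    {ν : M₁ →L[𝕜] 𝕜} {T : M →L[𝕜] M₂} (hT : ∀ a b, T (tp a b) = ν a • b) : ‖ν‖ ≤ ‖T‖ := by
  obtain ⟨b, hb⟩ := exists_ne (0 : M₂)
  have hb : 0 < ‖b‖ := norm_pos_iff.mpr hb
  refine ν.opNorm_le_bound (norm_nonneg T) fun a ↦ le_of_mul_le_mul_right ?_ hb
  calc ‖ν a‖ * ‖b‖ = ‖T (tp a b)‖ := by rw [hT, norm_smul]
    _ ≤ ‖T‖ * (‖a‖ * ‖b‖) := T.le_opNorm_of_le (htp a b)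
    _ = ‖T‖ * ‖a‖ * ‖b‖ := by ring

theorem tomiyama_slice_map_general
    {M M₁ M₂ E : Type*}
    [NormedAddCommGroup M] [NormedSpace ℂ M]
    [NormedAddCommGroup M₁] [NormedSpace ℂ M₁]
    [NormedAddCommGroup M₂] [NormedSpace ℂ M₂] [Nontrivial M₂]
    [NormedAddCommGroup E] [NormedSpace ℂ E]
    -- predual duality : `M₂ = ((M₂)_*)* = E*`
    (J : M₂ ≃ₗᵢ[ℂ] StrongDual ℂ E)
    -- the normal slice maps `φ ↦ id₁ ⊗̄ φ : M → M₁`, `φ ∈ (M₂)_* = E`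
    (slice : E →ₗ[ℂ] (M →L[ℂ] M₁))
    (hslice_norm : ∀ φ : E, ‖slice φ‖ ≤ ‖φ‖)
    -- elementary tensors `a ⊗ b ∈ M₁ ⊗̄ M₂ = M`
    (tp : M₁ →ₗ[ℂ] M₂ →ₗ[ℂ] M)
    (htp_norm : ∀ a b, ‖tp a b‖ ≤ ‖a‖ * ‖b‖)
    (htp_slice : ∀ (φ : E) (a : M₁) (b : M₂), slice φ (tp a b) = (J b φ) • a)
    (ν : M₁ →L[ℂ] ℂ) :
    ∃! T : M →L[ℂ] M₂,
      (∀ (φ : E) (x : M), J (T x) φ = ν (slice φ x)) ∧ ‖T‖ = ‖ν‖ := by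
  let S : E →L[ℂ] M →L[ℂ] M₁ := slice.mkContinuous 1 fun φ ↦ by simpa using hslice_norm φ
  have hS : ‖S‖ ≤ 1 := LinearMap.mkContinuous_norm_le _ zero_le_one _
  refine ⟨tomiyamaSlice J S ν, ⟨apply_tomiyamaSlice_apply J S ν, le_antisymm ?_ ?_⟩,
    fun T hT ↦ eq_tomiyamaSlice_of_apply J S ν hT.1⟩
  · calc ‖tomiyamaSlice J S ν‖ ≤ ‖ν‖ * ‖S‖ := norm_tomiyamaSlice_le J S ν
      _ ≤ ‖ν‖ := mul_le_of_le_one_right (norm_nonneg ν) hS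
  · exact norm_le_of_apply_tmul htp_norm (tomiyamaSlice_apply_tmul J S ν htp_slice)

/-- Tomiyama slice maps. Let `M = M₁ ⊗̄ M₂` be the von Neumann
tensor product of von Neumann algebras `M₁` and `M₂` (modelled abstractly:
`J : M₂ ≃ E*` is the predual duality, `slice φ = id₁ ⊗̄ φ` are the normal slice
maps, and `tp` is the embedding of elementary tensors), and let `ν` be a bounded
linear functional on `M₁`.  Then there is a unique bounded linear map
`ν ⊗_M id₂ : M → M₂` with `φ ∘ (ν ⊗_M id₂) = ν ∘ (id₁ ⊗̄ φ)` for all normal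
functionals `φ ∈ (M₂)_*`, and its norm equals `‖ν‖`. -/
theorem tomiyama_slice_map
    {M M₁ M₂ E : Type*}
    [NormedAddCommGroup M] [NormedSpace ℂ M] [CompleteSpace M]
    [NormedAddCommGroup M₁] [NormedSpace ℂ M₁] [CompleteSpace M₁]
    [NormedAddCommGroup M₂] [NormedSpace ℂ M₂] [CompleteSpace M₂] [Nontrivial M₂]
    [NormedAddCommGroup E] [NormedSpace ℂ E] [CompleteSpace E]
    -- predual duality : `M₂ = ((M₂)_*)* = E*`
    (J : M₂ ≃ₗᵢ[ℂ] StrongDual ℂ E)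
    -- the normal slice maps `φ ↦ id₁ ⊗̄ φ : M → M₁`, `φ ∈ (M₂)_* = E`
    (slice : E →ₗ[ℂ] (M →L[ℂ] M₁))
    (hslice_norm : ∀ φ : E, ‖slice φ‖ ≤ ‖φ‖)
    -- elementary tensors `a ⊗ b ∈ M₁ ⊗̄ M₂ = M`
    (tp : M₁ →ₗ[ℂ] M₂ →ₗ[ℂ] M)
    (htp_norm : ∀ a b, ‖tp a b‖ ≤ ‖a‖ * ‖b‖)
    (htp_slice : ∀ (φ : E) (a : M₁) (b : M₂), slice φ (tp a b) = (J b φ) • a)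
    (ν : M₁ →L[ℂ] ℂ) :
    ∃! T : M →L[ℂ] M₂,
      (∀ (φ : E) (x : M), J (T x) φ = ν (slice φ x)) ∧ ‖T‖ = ‖ν‖ :=
  tomiyama_slice_map_general J slice hslice_norm tp htp_norm htp_slice ν
end

section
/- In a unital Banach algebra A with identity e, every semigroup (x_t)_{t≥0} (x₀ = e, x_{s+t} = x_s x_t) that is norm-continuous at 0 (‖x_t − e‖ → 0) has a generator: there is a unique a ∈ A with ‖(1/t)(x_t − e) − a‖ → 0 as t → 0⁺, and x_t = exp(ta) = Σ_{n≥0} (ta)ⁿ/n! for all t ≥ 0. -/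
open Filter Topology Set MeasureTheory

/-!
For small `δ > 0` the mean `δ⁻¹ ∫₀^δ x_s ds` is close to `1`, so `y = ∫₀^δ x_s ds` is invertible.
The semigroup law gives `y x_t = ∫_t^{t+δ} x_s ds`, hence `x_t = y⁻¹ ∫_t^{t+δ} x_s ds` has right
derivative `y⁻¹ (x_{t+δ} - x_t) = a x_t` with `a = y⁻¹ (x_δ - 1)`. Then `u ↦ exp((t - u) a) x_u` has
zero right derivative on `[0, t]`, which yields `x_t = exp(t a)`; the generator is unique as a limit.
The integrals need continuity of `x` on `[0, ∞)`, which follows from continuity at `0` together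
with the local bound `‖x_t‖ = ‖x_{t/n}ⁿ‖ ≤ ‖x_{t/n}‖ⁿ`.
-/

def IsSemigroupOnNonneg {M : Type*} [Mul M] (x : ℝ → M) : Prop :=
  ∀ s t : ℝ, 0 ≤ s → 0 ≤ t → x (s + t) = x s * x t

theorem isUnit_intervalIntegral_of_norm_sub_one_le {A : Type*} [NormedRing A] [NormedAlgebra ℝ A]
    [CompleteSpace A] {f : ℝ → A} {δ c : ℝ} (hδ : 0 < δ) (hc : c < 1)
    (hf : IntervalIntegrable f volume 0 δ) (hf1 : ∀ s ∈ Ioc 0 δ, ‖f s - 1‖ ≤ c) :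
    IsUnit (∫ s in 0..δ, f s) := by
  have hdefect : ‖∫ s in 0..δ, (1 - f s)‖ ≤ c * δ := by
    have hbound := intervalIntegral.norm_integral_le_of_norm_le_const
      fun s hs => (norm_sub_rev (1 : A) (f s)).trans_le (hf1 s (by rwa [uIoc_of_le hδ.le] at hs))
    rwa [sub_zero, abs_of_pos hδ] at hbound
  have hmean : ‖δ⁻¹ • ∫ s in 0..δ, (1 - f s)‖ < 1 := by
    rw [norm_smul, Real.norm_of_nonneg (inv_nonneg.2 hδ.le)]
    calc δ⁻¹ * ‖∫ s in 0..δ, (1 - f s)‖ ≤ δ⁻¹ * (c * δ) := by gcongr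
      _ = c := by field_simp
      _ < 1 := hc
  have hsub : 1 - δ⁻¹ • ∫ s in 0..δ, (1 - f s) = δ⁻¹ • ∫ s in 0..δ, f s := by
    rw [intervalIntegral.integral_sub intervalIntegrable_const hf, intervalIntegral.integral_const,
      sub_zero, smul_sub, smul_smul, inv_mul_cancel₀ hδ.ne', one_smul, sub_sub_cancel]
  have hunit := (isUnit_one_sub_of_norm_lt_one hmean).smul (Units.mk0 δ hδ.ne')
  rwa [hsub, Units.smul_mk0, smul_smul, mul_inv_cancel₀ hδ.ne', one_smul] at hunit

theorem ContinuousOn.hasDerivWithinAt_intervalIntegral_add_const {E : Type*}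
    [NormedAddCommGroup E] [NormedSpace ℝ E] [CompleteSpace E] {f : ℝ → E} {a δ t : ℝ}
    (hf : ContinuousOn f (Ici a)) (hδ : 0 ≤ δ) (ht : a ≤ t) :
    HasDerivWithinAt (fun r => ∫ s in r..r + δ, f s) (f (t + δ) - f t) (Ici t) t := by
  set g : ℝ → E := fun s => f (max s a)
  have hg : Continuous g :=
    hf.comp_continuous (continuous_id.max continuous_const) fun s => le_max_right s a
  have hgf : ∀ s ∈ Ici a, g s = f s := fun s hs => congrArg f (max_eq_left hs)
  have hG : HasDerivAt (fun r => ∫ s in r..r + δ, g s) (g (t + δ) - g t) t := by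
    have hprim := (hg.integral_hasStrictDerivAt a (t + δ)).hasDerivAt.comp_add_const t δ |>.sub
      (hg.integral_hasStrictDerivAt a t).hasDerivAt
    refine hprim.congr_of_eventuallyEq (Eventually.of_forall fun r => ?_)
    exact (intervalIntegral.integral_interval_sub_left (hg.intervalIntegrable _ _)
      (hg.intervalIntegrable _ _)).symm
  rw [← hgf t ht, ← hgf (t + δ) (mem_Ici.2 (by linarith))]
  refine hG.hasDerivWithinAt.congr_of_mem (fun r hr => ?_) self_mem_Ici
  refine intervalIntegral.integral_congr fun s hs => (hgf s ?_).symm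
  rw [uIcc_of_le (by linarith)] at hs
  exact ht.trans (hr.trans hs.1)

theorem eq_exp_smul_mul_of_hasDerivWithinAt {A : Type*} [NormedRing A] [NormedAlgebra ℝ A]
    [CompleteSpace A] {x : ℝ → A} {a : A} (hc : ContinuousOn x (Ici 0))
    (hd : ∀ t, 0 ≤ t → HasDerivWithinAt x (a * x t) (Ici t) t) {t : ℝ} (ht : 0 ≤ t) :
    x t = NormedSpace.exp (t • a) * x 0 := by
  set g : ℝ → A := fun u => NormedSpace.exp ((t - u) • a) * x u
  have hexp : ∀ u, HasDerivAt (fun u => NormedSpace.exp ((t - u) • a))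
      (-(NormedSpace.exp ((t - u) • a) * a)) u := fun u => by
    simpa [Function.comp_def] using
      (hasDerivAt_exp_smul_const a (t - u)).scomp u ((hasDerivAt_id u).const_sub t)
  have hg : ∀ u ∈ Icc 0 t, g u = g 0 := by
    refine constant_of_has_deriv_right_zero ?_ fun u hu => ?_
    · exact (continuous_iff_continuousAt.2 fun u => (hexp u).continuousAt).continuousOn.mul
        (hc.mono Icc_subset_Ici_self)
    · simpa [mul_assoc] using (hexp u).hasDerivWithinAt.fun_mul (hd u hu.1)
  simpa [g] using hg t ⟨ht, le_rfl⟩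

namespace IsSemigroupOnNonneg

theorem apply_natCast_mul {M : Type*} [Monoid M] {x : ℝ → M} (hx : IsSemigroupOnNonneg x)
    (h0 : x 0 = 1) {s : ℝ} (hs : 0 ≤ s) : ∀ n : ℕ, x (n * s) = x s ^ n
  | 0 => by simp [h0]
  | n + 1 => by
    rw [Nat.cast_succ, add_one_mul, hx _ _ (by positivity) hs, apply_natCast_mul hx h0 hs n,
      pow_succ]

variable {A : Type*} [NormedRing A] {x : ℝ → A}

theorem exists_norm_le (hx : IsSemigroupOnNonneg x) (h0 : x 0 = 1)
    (hc : ContinuousWithinAt x (Ici 0) 0) (T : ℝ) : ∃ C, ∀ t ∈ Icc 0 T, ‖x t‖ ≤ C := by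
  obtain ⟨δ, hδ, hsmall⟩ : ∃ δ, 0 < δ ∧ Icc 0 δ ⊆ {s | ‖x s‖ < ‖x 0‖ + 1} :=
    mem_nhdsGE_iff_exists_Icc_subset.mp (hc.norm.eventually (gt_mem_nhds (lt_add_one _)))
  set N : ℕ := ⌈T / δ⌉₊ + 1
  have hN : (0 : ℝ) < N := by positivity
  have hTN : T ≤ δ * N := by
    rw [← div_le_iff₀' hδ]
    exact (Nat.le_ceil _).trans (by simp [N])
  refine ⟨(‖x 0‖ + 1) ^ N, fun t ht => ?_⟩
  have hstep : t / N ∈ Icc 0 δ :=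
    ⟨by positivity [ht.1], (div_le_iff₀ hN).2 (ht.2.trans hTN)⟩
  calc ‖x t‖ = ‖x (t / N) ^ N‖ := by
        rw [← hx.apply_natCast_mul h0 hstep.1, mul_div_cancel₀ _ hN.ne']
    _ ≤ ‖x (t / N)‖ ^ N := norm_pow_le' _ (by positivity)
    _ ≤ (‖x 0‖ + 1) ^ N := by gcongr; exact (hsmall hstep).le

theorem norm_sub_le (hx : IsSemigroupOnNonneg x) {s u : ℝ} (hs : 0 ≤ s) (hsu : s ≤ u) :
    ‖x u - x s‖ ≤ ‖x s‖ * ‖x (u - s) - 1‖ := by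
  rw [← add_sub_cancel s u, hx s (u - s) hs (sub_nonneg.2 hsu), add_sub_cancel_left, ← mul_sub_one]
  exact norm_mul_le _ _

theorem continuousOn_Ici (hx : IsSemigroupOnNonneg x) (h0 : x 0 = 1)
    (hc : ContinuousWithinAt x (Ici 0) 0) : ContinuousOn x (Ici 0) := by
  intro t ht
  obtain ⟨C, hC⟩ := hx.exists_norm_le h0 hc (t + 1)
  have hdist : ∀ s ∈ Icc 0 (t + 1), ‖x s - x t‖ ≤ C * ‖x |s - t| - 1‖ := by
    intro s hs
    rcases le_total s t with hst | hts
    · rw [norm_sub_rev, abs_of_nonpos (sub_nonpos.2 hst), neg_sub]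
      exact (hx.norm_sub_le hs.1 hst).trans (by gcongr; exact hC s hs)
    · rw [abs_of_nonneg (sub_nonneg.2 hts)]
      exact (hx.norm_sub_le ht hts).trans (by gcongr; exact hC t ⟨ht, by linarith⟩)
  have habs : Tendsto (fun s => |s - t|) (𝓝[Ici 0] t) (𝓝[Ici 0] 0) :=
    tendsto_nhdsWithin_iff.2 ⟨((continuous_abs.comp (continuous_sub_right t)).tendsto' t 0
      (by simp)).mono_left nhdsWithin_le_nhds, Eventually.of_forall fun s => abs_nonneg (s - t)⟩
  rw [ContinuousWithinAt, h0, tendsto_iff_norm_sub_tendsto_zero] at hc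
  rw [ContinuousWithinAt, tendsto_iff_norm_sub_tendsto_zero]
  refine squeeze_zero' (Eventually.of_forall fun _ => norm_nonneg _) ?_
    (by simpa using (hc.comp habs).const_mul C)
  filter_upwards [self_mem_nhdsWithin, nhdsWithin_le_nhds (Iic_mem_nhds (lt_add_one t))]
    with s hs hs' using hdist s ⟨hs, hs'⟩

variable [NormedAlgebra ℝ A] [CompleteSpace A]

theorem intervalIntegral_mul_eq (hx : IsSemigroupOnNonneg x) {δ t : ℝ} (hδ : 0 ≤ δ) (ht : 0 ≤ t)
    (hi : IntervalIntegrable x volume 0 δ) :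
    (∫ s in 0..δ, x s) * x t = ∫ s in t..t + δ, x s :=
  calc (∫ s in 0..δ, x s) * x t = ∫ s in 0..δ, x s * x t :=
        (((ContinuousLinearMap.mul ℝ A).flip (x t)).intervalIntegral_comp_comm hi).symm
    _ = ∫ s in 0..δ, x (s + t) := intervalIntegral.integral_congr fun s hs =>
        (hx s t (by rw [uIcc_of_le hδ] at hs; exact hs.1) ht).symm
    _ = ∫ s in t..t + δ, x s := by
        rw [intervalIntegral.integral_comp_add_right, zero_add, add_comm]

theorem exists_hasDerivWithinAt (hx : IsSemigroupOnNonneg x) (h0 : x 0 = 1)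
    (hc : ContinuousOn x (Ici 0)) :
    ∃ a : A, ∀ t, 0 ≤ t → HasDerivWithinAt x (a * x t) (Ici t) t := by
  have hnear : ∀ᶠ s in 𝓝[≥] 0, ‖x s - 1‖ ≤ 1 / 2 := by
    have hc0 := hc 0 self_mem_Ici
    rw [ContinuousWithinAt, h0, tendsto_iff_norm_sub_tendsto_zero] at hc0
    exact hc0.eventually (ge_mem_nhds (by norm_num))
  obtain ⟨δ, hδ, hδnear⟩ := mem_nhdsGE_iff_exists_Icc_subset.mp hnear
  have hi : IntervalIntegrable x volume 0 δ :=
    (hc.mono Icc_subset_Ici_self).intervalIntegrable_of_Icc hδ.le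
  obtain ⟨u, hu⟩ := isUnit_intervalIntegral_of_norm_sub_one_le hδ (by norm_num) hi
    fun s hs => hδnear (Ioc_subset_Icc_self hs)
  refine ⟨↑u⁻¹ * (x δ - 1), fun t ht => ?_⟩
  have hxt : ∀ r ∈ Ici t, x r = ↑u⁻¹ * ∫ s in r..r + δ, x s := fun r hr => by
    rw [← hx.intervalIntegral_mul_eq hδ.le (ht.trans hr) hi, ← hu, Units.inv_mul_cancel_left]
  have hd := ((hc.hasDerivWithinAt_intervalIntegral_add_const hδ.le ht).const_mul
    (↑u⁻¹ : A)).congr_of_mem hxt self_mem_Ici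
  rwa [add_comm, hx δ t hδ.le ht, ← sub_one_mul, ← mul_assoc] at hd

end IsSemigroupOnNonneg

/-- In a unital Banach algebra, every one-parameter semigroup
`(x_t)_{t ≥ 0}` (`x₀ = 1`, `x_{s+t} = x_s x_t`) which is norm-continuous at `0`
has a generator: a unique `a` with `‖(1/t)(x_t − 1) − a‖ → 0` as `t → 0⁺`, and
then `x_t = exp(t a)` for all `t ≥ 0`. -/
theorem banach_algebra_semigroup_generator
    {A : Type*} [NormedRing A] [NormedAlgebra ℝ A] [CompleteSpace A]
    (x : ℝ → A)
    (h0 : x 0 = 1)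
    (hsg : ∀ s t : ℝ, 0 ≤ s → 0 ≤ t → x (s + t) = x s * x t)
    (hcont : Tendsto (fun t => ‖x t - 1‖) (𝓝[>] (0 : ℝ)) (𝓝 0)) :
    ∃! a : A,
      Tendsto (fun t : ℝ => ‖t⁻¹ • (x t - 1) - a‖) (𝓝[>] (0 : ℝ)) (𝓝 0) ∧
      ∀ t : ℝ, 0 ≤ t → x t = NormedSpace.exp (t • a) := by
  have hx : IsSemigroupOnNonneg x := hsg
  have hc0 : ContinuousWithinAt x (Ici 0) 0 := by
    rw [← continuousWithinAt_Ioi_iff_Ici, ContinuousWithinAt, h0]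
    exact tendsto_iff_norm_sub_tendsto_zero.mpr hcont
  have hc := hx.continuousOn_Ici h0 hc0
  obtain ⟨a, ha⟩ := hx.exists_hasDerivWithinAt h0 hc
  have hlim : Tendsto (fun t : ℝ => t⁻¹ • (x t - 1)) (𝓝[>] 0) (𝓝 a) := by
    have hslope := hasDerivWithinAt_iff_tendsto_slope.mp (ha 0 le_rfl)
    rw [Ici_sdiff_left, h0, mul_one] at hslope
    exact hslope.congr fun t => by rw [slope_def_module, h0, sub_zero]
  refine ⟨a, ⟨tendsto_iff_norm_sub_tendsto_zero.mp hlim, fun t ht => ?_⟩,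
    fun b hb => tendsto_nhds_unique (tendsto_iff_norm_sub_tendsto_zero.mpr hb.1) hlim⟩
  rw [eq_exp_smul_mul_of_hasDerivWithinAt hc ha ht, h0, mul_one]
end

section
/- Let B be a C*-bialgebra and (P_t)_{t≥0} a semigroup of bounded maps on M(B) with P_t|_B satisfying the commutativity property L_μ P_t = P_t L_μ for all μ ∈ B* and t ≥ 0, where L_μ = (μ ⊗ id)Δ. Then (P_t) satisfies the weak invariance condition P_t = (id ⊗ (ε ∘ P_t))Δ for all t ≥ 0. -/
/-!
Strict functionals separate `M(B)`, so it suffices to compare `μ̃ ∘ P_t ∘ j` with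
`μ̃ ∘ R_{ε ∘ P_t}`. The counit property `ε̃ ∘ L̃_μ = μ̃` and the commutation hypothesis give
`μ̃ ∘ P_t = ε̃ ∘ P_t ∘ L̃_μ`; restricted to `B` this is `(ε ∘ P_t)^~ ∘ L_μ`, which the slice
calculus turns into `μ̃ ∘ R_{ε ∘ P_t}`.
-/

section SliceCalculus

variable {𝕜 E F : Type*} [CommSemiring 𝕜] [TopologicalSpace 𝕜]
  [AddCommMonoid E] [Module 𝕜 E] [TopologicalSpace E]
  [AddCommMonoid F] [Module 𝕜 F] [TopologicalSpace F]

theorem eq_of_forall_comp_eq_of_separating {ι : Type*} (φ : ι → F →L[𝕜] 𝕜)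
    (hsep : ∀ m m' : F, (∀ i, φ i m = φ i m') → m = m') {f g : E →L[𝕜] F}
    (h : ∀ i, (φ i).comp f = (φ i).comp g) : f = g :=
  ContinuousLinearMap.ext fun b => hsep _ _ fun i => congrArg (fun ψ => ψ b) (h i)

theorem ext_comp_eq_counit_comp_comp_of_commute (ext : (E →L[𝕜] 𝕜) → (F →L[𝕜] 𝕜))
    (ε μ : E →L[𝕜] 𝕜) (Lt : F →L[𝕜] F) (hB : (ext ε).comp Lt = ext μ) {T : F →L[𝕜] F}
    (hT : Lt.comp T = T.comp Lt) :
    (ext μ).comp T = ((ext ε).comp T).comp Lt := by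
  rw [← hB, ContinuousLinearMap.comp_assoc, hT, ContinuousLinearMap.comp_assoc]

theorem comp_eq_R_of_forall_commute (j : E →L[𝕜] F) (ε : E →L[𝕜] 𝕜)
    (ext : (E →L[𝕜] 𝕜) → (F →L[𝕜] 𝕜))
    (hsep : ∀ m m' : F, (∀ μ : E →L[𝕜] 𝕜, ext μ m = ext μ m') → m = m')
    (L R : (E →L[𝕜] 𝕜) → (E →L[𝕜] F)) (Lt : (E →L[𝕜] 𝕜) → (F →L[𝕜] F))
    (hLrest : ∀ μ, (Lt μ).comp j = L μ)
    (hA : ∀ μ θ : E →L[𝕜] 𝕜, (ext μ).comp (R θ) = (ext θ).comp (L μ))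
    (hB : ∀ μ : E →L[𝕜] 𝕜, (ext ε).comp (Lt μ) = ext μ) {T : F →L[𝕜] F}
    (hText : ext (((ext ε).comp T).comp j) = (ext ε).comp T)
    (hT : ∀ μ, (Lt μ).comp T = T.comp (Lt μ)) :
    T.comp j = R (((ext ε).comp T).comp j) := by
  refine eq_of_forall_comp_eq_of_separating ext hsep fun μ => ?_
  calc (ext μ).comp (T.comp j)
      = (((ext ε).comp T).comp (Lt μ)).comp j := by
        rw [← ContinuousLinearMap.comp_assoc,
          ext_comp_eq_counit_comp_comp_of_commute ext ε μ (Lt μ) (hB μ) (hT μ)]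
    _ = (ext (((ext ε).comp T).comp j)).comp (L μ) := by
        rw [hText, ContinuousLinearMap.comp_assoc, hLrest]
    _ = (ext μ).comp (R (((ext ε).comp T).comp j)) := (hA _ _).symm

end SliceCalculus

theorem commutation_implies_weak_invariance_general
    {B Mb : Type*}
    [NonUnitalNormedRing B]
    [NormedSpace ℂ B]
    [NormedRing Mb]
    [NormedAlgebra ℂ Mb]
    (j : B →L[ℂ] Mb)
    (ε : B →L[ℂ] ℂ)
    -- strict extension of functionals; strict functionals separate `M(B)`
    (ext : (B →L[ℂ] ℂ) → (Mb →L[ℂ] ℂ))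
    (hsep : ∀ m m' : Mb, (∀ μ : B →L[ℂ] ℂ, ext μ m = ext μ m') → m = m')
    -- the maps `L_μ`, `R_μ` and the strict extensions `L̃_μ`
    (L R : (B →L[ℂ] ℂ) → (B →L[ℂ] Mb))
    (Lt : (B →L[ℂ] ℂ) → (Mb →L[ℂ] Mb))
    (hLrest : ∀ μ, (Lt μ).comp j = L μ)
    -- slice calculus: `μ̃ ∘ R_θ = θ̃ ∘ L_μ` and `ε̃ ∘ L̃_μ = μ̃`
    (hA : ∀ μ θ : B →L[ℂ] ℂ, (ext μ).comp (R θ) = (ext θ).comp (L μ))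
    (hB : ∀ μ : B →L[ℂ] ℂ, (ext ε).comp (Lt μ) = ext μ)
    -- the strict semigroup on `M(B)`
    (P : ℝ → (Mb →L[ℂ] Mb))
    -- strictness of the functionals `ε ∘ P_t`: their strict extension is `ε̃ ∘ P̃_t`
    (hPext : ∀ t : ℝ, 0 ≤ t →
      ext (((ext ε).comp (P t)).comp j) = (ext ε).comp (P t))
    -- the commutation assumption `L_μ P_t = P_t L_μ`
    (hcomm : ∀ (μ : B →L[ℂ] ℂ) (t : ℝ), 0 ≤ t →
      (Lt μ).comp (P t) = (P t).comp (Lt μ)) :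
    ∀ t : ℝ, 0 ≤ t → (P t).comp j = R (((ext ε).comp (P t)).comp j) :=
  fun t ht => comp_eq_R_of_forall_commute j ε ext hsep L R Lt hLrest hA hB (hPext t ht)
    fun μ => hcomm μ t ht

/-- Let `(P_t)` be a semigroup of bounded maps on `M(B) = Mb`
(for a C*-bialgebra `B` with embedding `j : B → M(B)`, counit `ε`, strict
extension map `ext : B* → M(B)*`, slice maps `L μ = (μ ⊗ id)Δ`,
`R μ = (id ⊗ μ)Δ : B → M(B)`, and strict extensions `Lt μ = L̃_μ` on `M(B)`).
If the restrictions `P_t|_B` commute with all the maps `L_μ`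
(`L_μ P_t = P_t L_μ`), then `(P_t)` satisfies the weak invariance condition
`P_t|_B = (id ⊗ (ε ∘ P_t))Δ = R (ε̃ ∘ P_t ∘ j)`. -/
theorem commutation_implies_weak_invariance
    {B Mb : Type*}
    [NonUnitalNormedRing B] [StarRing B] [CStarRing B]
    [NormedSpace ℂ B] [CompleteSpace B]
    [NormedRing Mb] [StarRing Mb] [CStarRing Mb]
    [NormedAlgebra ℂ Mb] [CompleteSpace Mb]
    (j : B →L[ℂ] Mb)
    (hj_mul : ∀ a b : B, j (a * b) = j a * j b)
    (hj_star : ∀ a : B, j (star a) = star (j a))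
    (ε : B →L[ℂ] ℂ)
    -- strict extension of functionals; strict functionals separate `M(B)`
    (ext : (B →L[ℂ] ℂ) → (Mb →L[ℂ] ℂ))
    (hext_j : ∀ μ, (ext μ).comp j = μ)
    (hsep : ∀ m m' : Mb, (∀ μ : B →L[ℂ] ℂ, ext μ m = ext μ m') → m = m')
    -- the maps `L_μ`, `R_μ` and the strict extensions `L̃_μ`
    (L R : (B →L[ℂ] ℂ) → (B →L[ℂ] Mb))
    (Lt : (B →L[ℂ] ℂ) → (Mb →L[ℂ] Mb))
    (hLrest : ∀ μ, (Lt μ).comp j = L μ)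
    -- slice calculus: `μ̃ ∘ R_θ = θ̃ ∘ L_μ` and `ε̃ ∘ L̃_μ = μ̃`
    (hA : ∀ μ θ : B →L[ℂ] ℂ, (ext μ).comp (R θ) = (ext θ).comp (L μ))
    (hB : ∀ μ : B →L[ℂ] ℂ, (ext ε).comp (Lt μ) = ext μ)
    -- the strict semigroup on `M(B)`
    (P : ℝ → (Mb →L[ℂ] Mb))
    (hP0 : P 0 = ContinuousLinearMap.id ℂ Mb)
    (hPsg : ∀ s t : ℝ, 0 ≤ s → 0 ≤ t → P (s + t) = (P s).comp (P t))
    -- strictness of the functionals `ε ∘ P_t`: their strict extension is `ε̃ ∘ P̃_t`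
    (hPext : ∀ t : ℝ, 0 ≤ t →
      ext (((ext ε).comp (P t)).comp j) = (ext ε).comp (P t))
    -- the commutation assumption `L_μ P_t = P_t L_μ`
    (hcomm : ∀ (μ : B →L[ℂ] ℂ) (t : ℝ), 0 ≤ t →
      (Lt μ).comp (P t) = (P t).comp (Lt μ)) :
    ∀ t : ℝ, 0 ≤ t → (P t).comp j = R (((ext ε).comp (P t)).comp j) :=
  commutation_implies_weak_invariance_general j ε ext hsep L R Lt hLrest hA hB P hPext hcomm
end

section
/- Let B be a C*-bialgebra satisfying the residual vanishing at infinity condition: (B ⊗ 1)Δ(B) ⊆ B ⊗ B and (1 ⊗ B)Δ(B) ⊆ B ⊗ B. Assume every μ ∈ B* factorizes as μ = λ·c (i.e. μ(a) = λ(ca)) for some λ ∈ B* and c ∈ B. Then for every μ ∈ B*, the maps L_μ = (μ ⊗ id)Δ and R_μ = (id ⊗ μ)Δ map B into B (not merely into M(B)). -/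
/-! Write `μ = λ·c`. The module property of slice maps gives
`(μ ⊗ id)Δ(a) = (λ ⊗ id)((c ⊗ 1)Δ(a))`, residual vanishing at infinity puts `(c ⊗ 1)Δ(a)` in
`B ⊗ B`, and on `B ⊗ B` the slice map `λ ⊗ id` takes values in `B`. The same argument with
`1 ⊗ c` handles `R_μ`. -/

theorem exists_slice_comul_eq {F B M T C : Type*} [Mul C] (j : B → M) (k : T → C) (Δ : B → C)
    (m : B → C) (slice : F → C → M) {μ lam : F} {c : B} (sliceT : T → B)
    (hk : ∀ x, slice lam (k x) = j (sliceT x))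
    (hrv : ∀ a, ∃ x, m c * Δ a = k x)
    (hmod : ∀ y, slice μ y = slice lam (m c * y)) (a : B) :
    ∃ b, slice μ (Δ a) = j b := by
  obtain ⟨x, hx⟩ := hrv a
  exact ⟨sliceT x, by rw [hmod, hx, hk]⟩

theorem residual_vanishing_L_R_preserve_B_general
    {B Mb T₂ C₂ : Type*}
    [NonUnitalNormedRing B]
    [NormedSpace ℂ B]
    [NormedAddCommGroup Mb] [NormedSpace ℂ Mb]
    [NormedAddCommGroup T₂] [NormedSpace ℂ T₂]
    [NormedRing C₂] [NormedAlgebra ℂ C₂]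
    (jB : B →L[ℂ] Mb)
    (k : T₂ →L[ℂ] C₂)
    (Δ : B →L[ℂ] C₂)
    (lft rgt : B →L[ℂ] C₂)   -- `b ↦ b ⊗ 1` and `b ↦ 1 ⊗ b`
    -- residual vanishing at infinity
    (hrv1 : ∀ b a : B, ∃ x : T₂, lft b * Δ a = k x)
    (hrv2 : ∀ b a : B, ∃ x : T₂, rgt b * Δ a = k x)
    -- slice maps on `M(B ⊗ B)` and on `B ⊗ B` (left: `μ ⊗ id`, right: `id ⊗ μ`)
    (sliceL sliceR : (B →L[ℂ] ℂ) → (C₂ →L[ℂ] Mb))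
    (sliceLt sliceRt : (B →L[ℂ] ℂ) → (T₂ →L[ℂ] B))
    (hLk : ∀ μ x, sliceL μ (k x) = jB (sliceLt μ x))
    (hRk : ∀ μ x, sliceR μ (k x) = jB (sliceRt μ x))
    -- Cohen–Hewitt factorisation of functionals: `μ = λ·c`
    (hfactL : ∀ μ : B →L[ℂ] ℂ, ∃ (lam : B →L[ℂ] ℂ) (c : B), ∀ a, μ a = lam (c * a))
    (hfactR : ∀ μ : B →L[ℂ] ℂ, ∃ (lam : B →L[ℂ] ℂ) (c : B), ∀ a, μ a = lam (c * a))
    -- module property of slice maps: `(λ·c ⊗ id)(y) = (λ ⊗ id)((c ⊗ 1) y)` etc.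
    (hmodL : ∀ (lam : B →L[ℂ] ℂ) (c : B) (μ : B →L[ℂ] ℂ),
      (∀ a, μ a = lam (c * a)) → ∀ y : C₂, sliceL μ y = sliceL lam (lft c * y))
    (hmodR : ∀ (lam : B →L[ℂ] ℂ) (c : B) (μ : B →L[ℂ] ℂ),
      (∀ a, μ a = lam (c * a)) → ∀ y : C₂, sliceR μ y = sliceR lam (rgt c * y)) :
    ∀ μ : B →L[ℂ] ℂ,
      (∀ a : B, ∃ b : B, sliceL μ (Δ a) = jB b) ∧
      (∀ a : B, ∃ b : B, sliceR μ (Δ a) = jB b) := by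
  intro μ
  obtain ⟨lamL, cL, hcL⟩ := hfactL μ
  obtain ⟨lamR, cR, hcR⟩ := hfactR μ
  exact ⟨exists_slice_comul_eq jB k Δ lft (fun ν ↦ sliceL ν) (sliceLt lamL) (hLk lamL)
      (hrv1 cL) (hmodL lamL cL μ hcL),
    exists_slice_comul_eq jB k Δ rgt (fun ν ↦ sliceR ν) (sliceRt lamR) (hRk lamR)
      (hrv2 cR) (hmodR lamR cR μ hcR)⟩

/-- Let `B` be a C*-bialgebra satisfying the residual
vanishing at infinity condition: `(B ⊗ 1)Δ(B) ⊆ B ⊗ B` and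
`(1 ⊗ B)Δ(B) ⊆ B ⊗ B` (here `T₂` models `B ⊗ B`, `C₂` models `M(B ⊗ B)` with
`k : T₂ → C₂` the canonical embedding and `lft b = b ⊗ 1`, `rgt b = 1 ⊗ b`).
Assuming the Cohen–Hewitt factorisation `μ = λ·c` of functionals, the maps
`L_μ = (μ ⊗ id)Δ` and `R_μ = (id ⊗ μ)Δ` map `B` into `B` (i.e. into the range
of the embedding `jB : B → M(B)`), not merely into `M(B)`. -/
theorem residual_vanishing_L_R_preserve_B
    {B Mb T₂ C₂ : Type*}
    [NonUnitalNormedRing B] [StarRing B] [CStarRing B]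
    [NormedSpace ℂ B] [CompleteSpace B]
    [NormedAddCommGroup Mb] [NormedSpace ℂ Mb]
    [NormedAddCommGroup T₂] [NormedSpace ℂ T₂]
    [NormedRing C₂] [NormedAlgebra ℂ C₂] [CompleteSpace C₂]
    (jB : B →L[ℂ] Mb)
    (k : T₂ →L[ℂ] C₂)
    (Δ : B →L[ℂ] C₂)
    (lft rgt : B →L[ℂ] C₂)   -- `b ↦ b ⊗ 1` and `b ↦ 1 ⊗ b`
    -- residual vanishing at infinity
    (hrv1 : ∀ b a : B, ∃ x : T₂, lft b * Δ a = k x)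
    (hrv2 : ∀ b a : B, ∃ x : T₂, rgt b * Δ a = k x)
    -- slice maps on `M(B ⊗ B)` and on `B ⊗ B` (left: `μ ⊗ id`, right: `id ⊗ μ`)
    (sliceL sliceR : (B →L[ℂ] ℂ) → (C₂ →L[ℂ] Mb))
    (sliceLt sliceRt : (B →L[ℂ] ℂ) → (T₂ →L[ℂ] B))
    (hLk : ∀ μ x, sliceL μ (k x) = jB (sliceLt μ x))
    (hRk : ∀ μ x, sliceR μ (k x) = jB (sliceRt μ x))
    -- Cohen–Hewitt factorisation of functionals: `μ = λ·c`
    (hfactL : ∀ μ : B →L[ℂ] ℂ, ∃ (lam : B →L[ℂ] ℂ) (c : B), ∀ a, μ a = lam (c * a))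
    (hfactR : ∀ μ : B →L[ℂ] ℂ, ∃ (lam : B →L[ℂ] ℂ) (c : B), ∀ a, μ a = lam (c * a))
    -- module property of slice maps: `(λ·c ⊗ id)(y) = (λ ⊗ id)((c ⊗ 1) y)` etc.
    (hmodL : ∀ (lam : B →L[ℂ] ℂ) (c : B) (μ : B →L[ℂ] ℂ),
      (∀ a, μ a = lam (c * a)) → ∀ y : C₂, sliceL μ y = sliceL lam (lft c * y))
    (hmodR : ∀ (lam : B →L[ℂ] ℂ) (c : B) (μ : B →L[ℂ] ℂ),
      (∀ a, μ a = lam (c * a)) → ∀ y : C₂, sliceR μ y = sliceR lam (rgt c * y)) :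
    ∀ μ : B →L[ℂ] ℂ,
      (∀ a : B, ∃ b : B, sliceL μ (Δ a) = jB b) ∧
      (∀ a : B, ∃ b : B, sliceR μ (Δ a) = jB b) :=
  residual_vanishing_L_R_preserve_B_general jB k Δ lft rgt hrv1 hrv2 sliceL sliceR sliceLt sliceRt
    hLk hRk hfactL hfactR hmodL hmodR
end

section
/- Let B be a C*-bialgebra with residual vanishing at infinity, and let (λ_t)_{t≥0} be a convolution semigroup of functionals with associated semigroup P_t = R_{λ_t} : B → B. Then (λ_t) is weakly continuous (λ_t(a) → ε(a) for all a ∈ B as t → 0⁺) if and only if (P_t) is a C₀-semigroup on B (i.e. ‖P_t(a) − a‖ → 0 for all a ∈ B as t → 0⁺). -/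
/-!
The identities `μ ∘ P_t = λ_t ∘ L_μ` and `μ = ε ∘ L_μ` turn weak continuity of `(λ_t)` into weak
continuity at `0` of the orbits of `(P_t)`, and `λ_t = ε ∘ P_t` gives the converse. What remains is
the classical fact that a weakly continuous semigroup is strongly continuous. By uniform
boundedness, `‖P_t‖ ≤ M` near `0`, so the vectors whose orbits are norm-continuous at `0` form a
closed convex set. The orbits are weakly right-continuous, hence strongly measurable (Pettis), and
the averages `r⁻¹ ∫₀^r P_s x ds` have norm-continuous orbits, since `P_h` shifts the integral by
`h`. They converge weakly to `x` as `r → 0⁺`, so Mazur's theorem puts `x` in that closed convex set.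
-/

open Filter Topology MeasureTheory Set TopologicalSpace

section Dual

variable {𝕜 X Y : Type*} [RCLike 𝕜] [NormedAddCommGroup X] [NormedSpace 𝕜 X]
  [NormedAddCommGroup Y] [NormedSpace 𝕜 Y]

theorem TopologicalSpace.IsSeparable.exists_norming_seq {S : Set X} (hS : IsSeparable S) :
    ∃ ν : ℕ → StrongDual 𝕜 X, (∀ k, ‖ν k‖ ≤ 1) ∧ ∀ w ∈ S, ‖w‖ = ⨆ k, ‖ν k w‖ := by
  obtain ⟨c, hc, hSc⟩ := hS
  obtain ⟨e, he⟩ := (hc.insert 0).exists_eq_range (insert_nonempty 0 c)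
  choose ν hν1 hνe using fun k => exists_dual_vector'' 𝕜 (e k)
  have hle : ∀ k w, ‖ν k w‖ ≤ ‖w‖ := fun k w =>
    ((ν k).le_of_opNorm_le (hν1 k) w).trans_eq (one_mul _)
  refine ⟨ν, hν1, fun w hw => le_antisymm ?_ (ciSup_le fun k => hle k w)⟩
  have hbdd : BddAbove (range fun k => ‖ν k w‖) := ⟨‖w‖, forall_mem_range.2 fun k => hle k w⟩
  refine le_of_forall_pos_le_add fun η hη => ?_
  have hw' : w ∈ closure (range e) := he ▸ closure_mono (subset_insert 0 c) (hSc hw)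
  obtain ⟨_, ⟨k, rfl⟩, hk⟩ := Metric.mem_closure_iff.1 hw' (η / 2) (half_pos hη)
  rw [dist_eq_norm] at hk
  have hνk : ‖ν k (e k)‖ = ‖e k‖ := by simp [hνe]
  have hνw : ‖ν k (e k)‖ ≤ ‖ν k w‖ + ‖w - e k‖ := by
    calc ‖ν k (e k)‖ = ‖ν k w - ν k (w - e k)‖ := by rw [map_sub, sub_sub_cancel]
      _ ≤ ‖ν k w‖ + ‖w - e k‖ := (norm_sub_le _ _).trans (add_le_add le_rfl (hle k _))
  linarith [norm_le_norm_add_norm_sub' w (e k), le_ciSup hbdd k]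

theorem stronglyMeasurable_of_measurable_dual {α : Type*} [MeasurableSpace α] {f : α → X}
    (hf : ∀ μ : StrongDual 𝕜 X, Measurable fun a => μ (f a)) (hsep : IsSeparable (range f)) :
    StronglyMeasurable f := by
  obtain ⟨c, hc, hfc⟩ := hsep
  obtain ⟨v, hv⟩ := (hc.insert 0).exists_eq_range (insert_nonempty 0 c)
  have hfv : ∀ a, f a ∈ closure (range v) := fun a =>
    hv ▸ closure_mono (subset_insert 0 c) (hfc (mem_range_self a))
  set D := range fun p : ℕ × ℕ => v p.1 - v p.2
  obtain ⟨ν, -, hν⟩ := (countable_range fun p : ℕ × ℕ => v p.1 - v p.2).isSeparable.closure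
    |>.exists_norming_seq (𝕜 := 𝕜)
  have hdist : ∀ j, Measurable fun a => ‖f a - v j‖ := by
    intro j
    have hD : ∀ a, f a - v j ∈ closure D := fun a =>
      map_mem_closure (f := fun y => y - v j) (continuous_sub_right (v j)) (hfv a)
        (forall_mem_range.2 fun m => ⟨(m, j), rfl⟩)
    simp_rw [fun a => hν _ (hD a), map_sub]
    exact Measurable.iSup fun k => ((hf (ν k)).sub_const _).norm
  have happrox : ∀ (n : ℕ) a, ∃ j, ‖f a - v j‖ < 1 / (n + 1) := fun n a => by
    obtain ⟨_, ⟨j, rfl⟩, hj⟩ := Metric.mem_closure_iff.1 (hfv a) _ Nat.one_div_pos_of_nat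
    exact ⟨j, by rwa [← dist_eq_norm]⟩
  refine stronglyMeasurable_of_tendsto atTop (f := fun n a => v (Nat.find (happrox n a)))
    (fun n => StronglyMeasurable.of_discrete.comp_measurable
      (measurable_find _ fun j => measurableSet_lt (hdist j) measurable_const))
    (tendsto_pi_nhds.2 fun a => ?_)
  rw [tendsto_iff_norm_sub_tendsto_zero]
  refine squeeze_zero (fun _ => norm_nonneg _) (fun n => ?_) tendsto_one_div_add_atTop_nhds_zero_nat
  rw [norm_sub_rev]
  exact (Nat.find_spec (happrox n a)).le

theorem exists_norm_le_of_forall_dual_norm_le {ι : Type*} {v : ι → Y}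
    (h : ∀ μ : StrongDual 𝕜 Y, ∃ C, ∀ i, ‖μ (v i)‖ ≤ C) : ∃ C, ∀ i, ‖v i‖ ≤ C := by
  obtain ⟨C, hC⟩ := banach_steinhaus (g := fun i => NormedSpace.inclusionInDoubleDualLi 𝕜 (v i)) h
  exact ⟨C, fun i => (LinearIsometry.norm_map _ (v i)).symm.trans_le (hC i)⟩

theorem ContinuousLinearMap.isBoundedUnder_opNorm_of_forall_dual [CompleteSpace X] {ι : Type*}
    {l : Filter ι} [l.IsCountablyGenerated] {T : ι → X →L[𝕜] Y}
    (h : ∀ (μ : StrongDual 𝕜 Y) x, IsBoundedUnder (· ≤ ·) l fun i => ‖μ (T i x)‖) :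
    IsBoundedUnder (· ≤ ·) l fun i => ‖T i‖ := by
  by_contra hT
  obtain ⟨s, hs⟩ := l.exists_antitone_basis
  have hunb : ∀ n : ℕ, ∃ i ∈ s n, (n : ℝ) < ‖T i‖ := fun n => by
    by_contra! H
    exact hT ⟨n, eventually_map.2 (Filter.mem_of_superset (hs.mem n) H)⟩
  choose t hts ht using hunb
  have hbdd : ∀ (μ : StrongDual 𝕜 Y) (x : X), ∃ C, ∀ n, ‖μ (T (t n) x)‖ ≤ C := fun μ x => by
    obtain ⟨C, hC⟩ := ((hs.tendsto hts).isBoundedUnder_comp (h μ x)).bddAbove_range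
    exact ⟨C, fun n => hC (mem_range_self n)⟩
  obtain ⟨C, hC⟩ :=
    banach_steinhaus fun x => exists_norm_le_of_forall_dual_norm_le fun μ => hbdd μ x
  obtain ⟨n, hn⟩ := exists_nat_gt C
  exact (ht n).not_ge ((hC n).trans hn.le)

theorem isClosed_setOf_tendsto_of_eventually_opNorm_le {ι : Type*} {l : Filter ι}
    {S : ι → X →L[𝕜] X} {M : ℝ} (hM : ∀ᶠ i in l, ‖S i‖ ≤ M) :
    IsClosed {x | Tendsto (fun i => S i x) l (𝓝 x)} := by
  refine closure_subset_iff_isClosed.1 fun x hx => Metric.tendsto_nhds.2 fun ε hε => ?_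
  set η := ε / (3 * (|M| + 1))
  have hη : 0 < η := by positivity
  have hMη : (|M| + 1) * η = ε / 3 := by
    simp only [η]
    field_simp
  obtain ⟨w, hw, hxw⟩ := Metric.mem_closure_iff.1 hx η hη
  filter_upwards [hM, Metric.tendsto_nhds.1 hw (ε / 3) (by positivity)] with i hi hiw
  have hSi : dist (S i x) (S i w) ≤ |M| * η := by
    rw [dist_eq_norm, ← map_sub]
    exact (S i).le_of_opNorm_le (hi.trans (le_abs_self M)) _ |>.trans
      (mul_le_mul_of_nonneg_left (by rw [← dist_eq_norm]; exact hxw.le) (abs_nonneg M))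
  calc dist (S i x) x ≤ dist (S i x) (S i w) + dist (S i w) w + dist w x := dist_triangle4 _ _ _ _
    _ < ε := by rw [dist_comm] at hxw; linarith

end Dual

theorem tendsto_ceil_mul_div_nhdsGE (s : ℝ) :
    Tendsto (fun n : ℕ => (⌈s * (n + 1)⌉ : ℝ) / (n + 1)) atTop (𝓝[≥] s) := by
  have hge : ∀ n : ℕ, s ≤ (⌈s * (n + 1)⌉ : ℝ) / (n + 1) := fun n => by
    rw [le_div_iff₀ (by positivity)]
    exact Int.le_ceil _
  have hle : ∀ n : ℕ, (⌈s * (n + 1)⌉ : ℝ) / (n + 1) ≤ s + 1 / (n + 1) := fun n => by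
    rw [div_le_iff₀ (by positivity), add_mul, one_div_mul_cancel (by positivity)]
    exact (Int.ceil_lt_add_one _).le
  refine tendsto_nhdsWithin_of_tendsto_nhds_of_eventually_within _ ?_ (Eventually.of_forall hge)
  refine tendsto_of_tendsto_of_tendsto_of_le_of_le tendsto_const_nhds ?_ hge hle
  simpa using tendsto_one_div_add_atTop_nhds_zero_nat.const_add s

theorem measurable_of_continuousWithinAt_Ici {E : Type*} [TopologicalSpace E]
    [PseudoMetrizableSpace E] [MeasurableSpace E] [BorelSpace E] {g : ℝ → E}
    (hg : ∀ s, ContinuousWithinAt g (Ici s) s) : Measurable g :=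
  measurable_of_tendsto_metrizable (f := fun (n : ℕ) (s : ℝ) => g (⌈s * (n + 1)⌉ / (n + 1)))
    (fun n => (measurable_of_countable fun k : ℤ => g (k / ((n : ℝ) + 1))).comp
      (Int.measurable_ceil.comp (measurable_mul_const _)))
    (tendsto_pi_nhds.2 fun s => (hg s).tendsto.comp (tendsto_ceil_mul_div_nhdsGE s))

section Complex

variable {X : Type*} [NormedAddCommGroup X] [NormedSpace ℂ X]

theorem Convex.mem_of_forall_dual_tendsto {C : Set X} (hC : Convex ℝ C) (hCc : IsClosed C)
    {ι : Type*} {l : Filter ι} [l.NeBot] {u : ι → X} (hu : ∀ᶠ i in l, u i ∈ C) {v : X}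
    (h : ∀ μ : StrongDual ℂ X, Tendsto (fun i => μ (u i)) l (𝓝 (μ v))) : v ∈ C := by
  by_contra hv
  obtain ⟨μ, c, hμC, hcv⟩ := RCLike.geometric_hahn_banach_closed_point (𝕜 := ℂ) hC hCc hv
  exact hcv.not_ge (le_of_tendsto ((RCLike.continuous_re.tendsto _).comp (h μ))
    (hu.mono fun i hi => (hμC _ hi).le))

theorem isSeparable_range_of_dual_continuousWithinAt_Ici {F : ℝ → X}
    (hF : ∀ (μ : StrongDual ℂ X) s, ContinuousWithinAt (fun r => μ (F r)) (Ici s) s) :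
    IsSeparable (range F) := by
  set D := range fun p : ℤ × ℕ => (p.1 : ℝ) / (p.2 + 1)
  set W := Submodule.span ℂ (F '' D)
  have hW : IsSeparable (W.topologicalClosure : Set X) := by
    rw [Submodule.topologicalClosure_coe]
    exact ((countable_range _).image F).isSeparable.span.closure
  refine hW.mono (range_subset_iff.2 fun s => ?_)
  refine Convex.mem_of_forall_dual_tendsto (W.topologicalClosure.restrictScalars ℝ).convex
    W.isClosed_topologicalClosure (l := atTop) (u := fun n : ℕ => F (⌈s * (n + 1)⌉ / (n + 1)))
    (Eventually.of_forall fun n => ?_)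
    fun μ => (hF μ s).tendsto.comp (tendsto_ceil_mul_div_nhdsGE s)
  have hD : (⌈s * (n + 1)⌉ : ℝ) / (n + 1) ∈ D := ⟨(⌈s * (n + 1)⌉, n), by simp⟩
  exact W.le_topologicalClosure (Submodule.subset_span (mem_image_of_mem F hD))

theorem stronglyMeasurable_of_dual_continuousWithinAt_Ici {F : ℝ → X}
    (hF : ∀ (μ : StrongDual ℂ X) s, ContinuousWithinAt (fun r => μ (F r)) (Ici s) s) :
    StronglyMeasurable F :=
  stronglyMeasurable_of_measurable_dual (fun μ => measurable_of_continuousWithinAt_Ici (hF μ))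
    (isSeparable_range_of_dual_continuousWithinAt_Ici hF)

variable {T : ℝ → X →L[ℂ] X}

theorem tendsto_dual_semigroup_nhdsGT
    (hsg : ∀ s t : ℝ, 0 ≤ s → 0 ≤ t → T (s + t) = (T s).comp (T t))
    (hw : ∀ (μ : StrongDual ℂ X) x, Tendsto (fun t => μ (T t x)) (𝓝[>] 0) (𝓝 (μ x)))
    (μ : StrongDual ℂ X) (x : X) {s : ℝ} (hs : 0 < s) :
    Tendsto (fun r => μ (T r x)) (𝓝[>] s) (𝓝 (μ (T s x))) := by
  have hshift : Tendsto (fun r => r - s) (𝓝[>] s) (𝓝[>] 0) := by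
    have h := map_subRight_nhdsGT (c := s) (a := s)
    rw [sub_self] at h
    exact h.le
  refine ((hw (μ.comp (T s)) x).comp hshift).congr' ?_
  filter_upwards [self_mem_nhdsWithin] with r hr
  have hr' := hsg s (r - s) hs.le (sub_nonneg.2 (le_of_lt hr))
  rw [add_sub_cancel] at hr'
  simp [hr']

theorem aestronglyMeasurable_semigroup_apply
    (hsg : ∀ s t : ℝ, 0 ≤ s → 0 ≤ t → T (s + t) = (T s).comp (T t))
    (hw : ∀ (μ : StrongDual ℂ X) x, Tendsto (fun t => μ (T t x)) (𝓝[>] 0) (𝓝 (μ x))) (x : X) :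
    AEStronglyMeasurable (fun s => T s x) (volume.restrict (Ioi 0)) := by
  -- extended by `x` to the left of `0`, the orbit is weakly right-continuous everywhere
  set G : ℝ → X := fun s => if 0 < s then T s x else x
  have hG : ∀ μ : StrongDual ℂ X, ∀ s, 0 ≤ s →
      Tendsto (fun r => μ (G r)) (𝓝[>] s) (𝓝 (μ (G s))) := fun μ s hs => by
    have hGT : (fun r => μ (T r x)) =ᶠ[𝓝[>] s] fun r => μ (G r) := by
      filter_upwards [self_mem_nhdsWithin] with r hr
      simp [G, hs.trans_lt hr]
    rcases hs.eq_or_lt with rfl | hs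
    · simpa [G] using (hw μ x).congr' hGT
    · simpa [G, hs] using (tendsto_dual_semigroup_nhdsGT hsg hw μ x hs).congr' hGT
  have hGm : StronglyMeasurable G := stronglyMeasurable_of_dual_continuousWithinAt_Ici fun μ s => by
    rcases lt_or_ge s 0 with hs | hs
    · refine ContinuousAt.continuousWithinAt (continuousAt_const (y := μ x) |>.congr ?_)
      filter_upwards [gt_mem_nhds hs] with r hr
      simp [G, hr.le.not_gt]
    · exact continuousWithinAt_Ioi_iff_Ici.1 (hG μ s hs)
  exact hGm.aestronglyMeasurable.congr
    ((ae_restrict_iff' measurableSet_Ioi).2 (Eventually.of_forall fun s hs => if_pos hs))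

theorem integrableOn_semigroup_apply {x : X}
    (hmeas : AEStronglyMeasurable (fun s => T s x) (volume.restrict (Ioi 0))) {δ M : ℝ}
    (hM : ∀ t ∈ Ioc 0 δ, ‖T t‖ ≤ M) : IntegrableOn (fun s => T s x) (Ioc 0 δ) :=
  ⟨hmeas.mono_set Ioc_subset_Ioi_self, .restrict_of_bounded (M * ‖x‖) measure_Ioc_lt_top <|
    (ae_restrict_iff' measurableSet_Ioc).2
      (Eventually.of_forall fun t ht => (T t).le_of_opNorm_le (hM t ht) x)⟩

theorem semigroup_apply_intervalIntegral_sub [CompleteSpace X]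
    (hsg : ∀ s t : ℝ, 0 ≤ s → 0 ≤ t → T (s + t) = (T s).comp (T t)) {x : X} {r h : ℝ}
    (hr : 0 ≤ r) (hh : 0 ≤ h) (hint : IntervalIntegrable (fun s => T s x) volume 0 (r + h)) :
    T h (∫ s in 0..r, T s x) - ∫ s in 0..r, T s x =
      (∫ s in r..r + h, T s x) - ∫ s in 0..h, T s x := by
  have hsub : ∀ a ∈ uIcc 0 (r + h), ∀ b ∈ uIcc 0 (r + h),
      IntervalIntegrable (fun s => T s x) volume a b :=
    fun a ha b hb => hint.mono_set (uIcc_subset_uIcc ha hb)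
  have h0 : (0 : ℝ) ∈ uIcc 0 (r + h) := left_mem_uIcc
  have hh' : h ∈ uIcc 0 (r + h) := mem_uIcc_of_le hh (by linarith)
  have hr' : r ∈ uIcc 0 (r + h) := mem_uIcc_of_le hr (by linarith)
  have hrh : r + h ∈ uIcc 0 (r + h) := right_mem_uIcc
  have hshift : T h (∫ s in 0..r, T s x) = ∫ s in h..r + h, T s x := by
    calc T h (∫ s in 0..r, T s x) = ∫ s in 0..r, T h (T s x) :=
          ((T h).intervalIntegral_comp_comm (hsub 0 h0 r hr')).symm
      _ = ∫ s in 0..r, T (s + h) x := intervalIntegral.integral_congr fun s hs => by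
          rw [add_comm, hsg h s hh (by rw [uIcc_of_le hr] at hs; exact hs.1)]
          rfl
      _ = ∫ s in h..r + h, T s x := by
          rw [intervalIntegral.integral_comp_add_right (fun s => T s x), zero_add]
  rw [hshift, intervalIntegral.integral_interval_sub_interval_comm' (hsub h hh' _ hrh)
    (hsub 0 h0 r hr') (hsub h hh' 0 h0)]

theorem tendsto_semigroup_apply_intervalIntegral [CompleteSpace X]
    (hsg : ∀ s t : ℝ, 0 ≤ s → 0 ≤ t → T (s + t) = (T s).comp (T t)) {x : X} {δ M : ℝ}
    (hM : ∀ t ∈ Ioc 0 δ, ‖T t‖ ≤ M) (hint : IntegrableOn (fun s => T s x) (Ioc 0 δ))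
    {r : ℝ} (hr : 0 ≤ r) (hrδ : r < δ) :
    Tendsto (fun h => T h (∫ s in 0..r, T s x)) (𝓝[>] 0) (𝓝 (∫ s in 0..r, T s x)) := by
  have hbound : ∀ a h, 0 ≤ a → 0 ≤ h → a + h ≤ δ → ‖∫ s in a..a + h, T s x‖ ≤ M * ‖x‖ * h := by
    intro a h ha hh hah
    have hle := intervalIntegral.norm_integral_le_of_norm_le_const (a := a) (b := a + h)
      (f := fun s => T s x) fun s hs => (T s).le_of_opNorm_le (hM s ?_) x
    · simpa [abs_of_nonneg hh] using hle
    · rw [uIoc_of_le (by linarith)] at hs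
      exact ⟨ha.trans_lt hs.1, hs.2.trans hah⟩
  have hint' : IntervalIntegrable (fun s => T s x) volume 0 δ :=
    (intervalIntegrable_iff_integrableOn_Ioc_of_le (hr.trans hrδ.le)).2 hint
  have hlim : Tendsto (fun h : ℝ => 2 * (M * ‖x‖) * h) (𝓝[>] 0) (𝓝 0) :=
    tendsto_nhdsWithin_of_tendsto_nhds
      (by simpa using (continuous_const_mul (2 * (M * ‖x‖))).tendsto 0)
  rw [tendsto_iff_norm_sub_tendsto_zero]
  refine squeeze_zero' (Eventually.of_forall fun _ => norm_nonneg _) ?_ hlim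
  filter_upwards [Ioo_mem_nhdsGT (sub_pos.2 hrδ)] with h hh
  have hrh : r + h ∈ uIcc 0 δ := mem_uIcc_of_le (by linarith [hh.1]) (by linarith [hh.2])
  rw [semigroup_apply_intervalIntegral_sub hsg hr hh.1.le
    (hint'.mono_set (uIcc_subset_uIcc left_mem_uIcc hrh))]
  calc _ ≤ ‖∫ s in r..r + h, T s x‖ + ‖∫ s in 0..h, T s x‖ := norm_sub_le _ _
    _ ≤ M * ‖x‖ * h + M * ‖x‖ * h := by
      gcongr
      · exact hbound r h hr hh.1.le (by linarith [hh.2])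
      · simpa using hbound 0 h le_rfl hh.1.le (by linarith [hh.2])
    _ = 2 * (M * ‖x‖) * h := by ring

theorem tendsto_dual_average_semigroup_apply [CompleteSpace X] (μ : StrongDual ℂ X) {x : X}
    (hmeas : AEStronglyMeasurable (fun s => T s x) (volume.restrict (Ioi 0)))
    (hw : Tendsto (fun t => μ (T t x)) (𝓝[>] 0) (𝓝 (μ x))) {δ : ℝ} (hδ : 0 < δ)
    (hint : IntegrableOn (fun s => T s x) (Ioc 0 δ)) :
    Tendsto (fun r => μ (r⁻¹ • ∫ s in 0..r, T s x)) (𝓝[>] 0) (𝓝 (μ x)) := by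
  have hderiv : HasDerivWithinAt (fun u => ∫ s in 0..u, μ (T s x)) (μ x) (Ici 0) 0 :=
    intervalIntegral.integral_hasDerivWithinAt_of_tendsto_ae_right IntervalIntegrable.refl
      ⟨Ioi 0, self_mem_nhdsWithin, μ.continuous.comp_aestronglyMeasurable hmeas⟩
      (hw.mono_left inf_le_left)
  refine ((hasDerivWithinAt_iff_tendsto_slope' self_notMem_Ioi).1
    (hderiv.mono Ioi_subset_Ici_self)).congr' ?_
  filter_upwards [Ioo_mem_nhdsGT hδ] with r hr
  have hint' : IntervalIntegrable (fun s => T s x) volume 0 r :=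
    (intervalIntegrable_iff_integrableOn_Ioc_of_le hr.1.le).2
      (hint.mono_set (Ioc_subset_Ioc_right hr.2.le))
  rw [slope_def_module, μ.map_smul_of_tower, μ.intervalIntegral_comp_comm hint']
  simp

theorem tendsto_semigroup_of_weak [CompleteSpace X]
    (hsg : ∀ s t : ℝ, 0 ≤ s → 0 ≤ t → T (s + t) = (T s).comp (T t))
    (hw : ∀ (μ : StrongDual ℂ X) x, Tendsto (fun t => μ (T t x)) (𝓝[>] 0) (𝓝 (μ x))) (x : X) :
    Tendsto (fun t => T t x) (𝓝[>] 0) (𝓝 x) := by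
  obtain ⟨M, hM⟩ := ContinuousLinearMap.isBoundedUnder_opNorm_of_forall_dual
    fun μ y => (hw μ y).norm.isBoundedUnder_le
  obtain ⟨δ, hδ, hδM⟩ := mem_nhdsGT_iff_exists_Ioc_subset.1 (eventually_map.1 hM)
  set X₀ := {y | Tendsto (fun t => T t y) (𝓝[>] 0) (𝓝 y)}
  have hX₀ : Convex ℝ X₀ := fun y hy z hz a b _ _ _ => by
    show Tendsto (fun t => T t (a • y + b • z)) _ _
    simpa only [map_add, ContinuousLinearMap.map_smul_of_tower] using
      (hy.const_smul a).add (hz.const_smul b)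
  have hmeas := aestronglyMeasurable_semigroup_apply hsg hw x
  have hint := integrableOn_semigroup_apply hmeas hδM
  refine hX₀.mem_of_forall_dual_tendsto (isClosed_setOf_tendsto_of_eventually_opNorm_le hM)
    (u := fun r => r⁻¹ • ∫ s in 0..r, T s x) ?_
    fun μ => tendsto_dual_average_semigroup_apply μ hmeas (hw μ x) hδ hint
  filter_upwards [Ioo_mem_nhdsGT hδ] with r hr
  show Tendsto (fun t => T t (r⁻¹ • _)) _ _
  simpa only [ContinuousLinearMap.map_smul_of_tower] using
    (tendsto_semigroup_apply_intervalIntegral hsg hδM hint hr.1.le hr.2).const_smul r⁻¹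

end Complex

theorem weakly_continuous_iff_C0_general
    {B : Type*}
    [NonUnitalNormedRing B]
    [NormedSpace ℂ B] [CompleteSpace B]
    (ε : B →L[ℂ] ℂ)
    (lam : ℝ → (B →L[ℂ] ℂ))
    (L : (B →L[ℂ] ℂ) → (B →L[ℂ] B))
    (P : ℝ → (B →L[ℂ] B))
    -- `(P_t)` is a semigroup on `B`
    (hPsg : ∀ s t : ℝ, 0 ≤ s → 0 ≤ t → P (s + t) = (P s).comp (P t))
    -- `λ_t = ε ∘ P_t`
    (hlam : ∀ t : ℝ, 0 ≤ t → ∀ a : B, lam t a = ε (P t a))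
    -- `μ ∘ P_t = λ_t ∘ L_μ`
    (hPL : ∀ t : ℝ, 0 ≤ t → ∀ (μ : B →L[ℂ] ℂ) (a : B), μ (P t a) = lam t (L μ a))
    -- `μ = ε ∘ L_μ`
    (hcounit : ∀ (μ : B →L[ℂ] ℂ) (a : B), μ a = ε (L μ a)) :
    (∀ a : B, Tendsto (fun t => lam t a) (𝓝[>] (0 : ℝ)) (𝓝 (ε a))) ↔
      (∀ a : B, Tendsto (fun t => P t a) (𝓝[>] (0 : ℝ)) (𝓝 a)) := by
  constructor
  · intro hlam_cont
    refine tendsto_semigroup_of_weak hPsg fun μ a => ?_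
    rw [hcounit μ a]
    refine (hlam_cont (L μ a)).congr' ?_
    filter_upwards [self_mem_nhdsWithin] with t ht
    exact (hPL t (le_of_lt ht) μ a).symm
  · intro hP_cont a
    refine ((ε.continuous.tendsto a).comp (hP_cont a)).congr' ?_
    filter_upwards [self_mem_nhdsWithin] with t ht
    exact (hlam t (le_of_lt ht) a).symm

/-- Feller property. Let `B` be a C*-bialgebra with residual
vanishing at infinity (so `R_μ = (id ⊗ μ)Δ` and `L_μ = (μ ⊗ id)Δ` map `B` to
`B`), and `(λ_t)` a convolution semigroup of functionals with associated
semigroup `P_t = R_{λ_t}` on `B`.  Then `(λ_t)` is weakly continuous iff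
`(P_t)` is a C₀-semigroup on `B`.  (Key identities: `λ_t = ε ∘ P_t`,
`μ ∘ P_t = λ_t ∘ L_μ` and `μ = ε ∘ L_μ`.) -/
theorem weakly_continuous_iff_C0
    {B : Type*}
    [NonUnitalNormedRing B] [StarRing B] [CStarRing B]
    [NormedSpace ℂ B] [CompleteSpace B]
    (ε : B →L[ℂ] ℂ)
    (lam : ℝ → (B →L[ℂ] ℂ))
    (L : (B →L[ℂ] ℂ) → (B →L[ℂ] B))
    (P : ℝ → (B →L[ℂ] B))
    -- `(P_t)` is a semigroup on `B`
    (hP0 : P 0 = ContinuousLinearMap.id ℂ B)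
    (hPsg : ∀ s t : ℝ, 0 ≤ s → 0 ≤ t → P (s + t) = (P s).comp (P t))
    -- `λ_t = ε ∘ P_t`
    (hlam : ∀ t : ℝ, 0 ≤ t → ∀ a : B, lam t a = ε (P t a))
    -- `μ ∘ P_t = λ_t ∘ L_μ`
    (hPL : ∀ t : ℝ, 0 ≤ t → ∀ (μ : B →L[ℂ] ℂ) (a : B), μ (P t a) = lam t (L μ a))
    -- `μ = ε ∘ L_μ`
    (hcounit : ∀ (μ : B →L[ℂ] ℂ) (a : B), μ a = ε (L μ a)) :
    (∀ a : B, Tendsto (fun t => lam t a) (𝓝[>] (0 : ℝ)) (𝓝 (ε a))) ↔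
      (∀ a : B, Tendsto (fun t => P t a) (𝓝[>] (0 : ℝ)) (𝓝 a)) :=
  weakly_continuous_iff_C0_general ε lam L P hPsg hlam hPL hcounit
end

section
/- Let G be a compact group and ψ : G → ℂ a continuous Hermitian conditionally positive-definite function with ψ(e) = 0. Then for each t ≥ 0 the function g ↦ exp(t·ψ(g)) is a continuous positive-definite function on G (Schönberg correspondence), equal to 1 at e. -/
open scoped ComplexOrder ComplexConjugate

/-!
Adjoining the identity with weight `-∑ zᵢ` to a family `gᵢ` shows that, for a Hermitian
conditionally positive-definite `ψ`, the kernel `ψ(gᵢ⁻¹gⱼ) - ψ(gᵢ⁻¹) - ψ(gⱼ) + ψ(1)` is a positive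
semidefinite matrix. By the Schur product theorem its entrywise powers, hence its entrywise
exponential, are positive semidefinite as well, and the matrix `exp ψ(gᵢ⁻¹gⱼ)` is that exponential
conjugated by the diagonal matrix `exp ψ(gᵢ)` and scaled by `exp(-ψ(1)) > 0`.
-/

/-- A function `φ : G → ℂ` is positive definite if
`∑ᵢⱼ conj(zᵢ) zⱼ φ(gᵢ⁻¹ gⱼ) ≥ 0` for all finite families. -/
def IsPosDefFn {G : Type*} [Group G] (φ : G → ℂ) : Prop :=
  ∀ (n : ℕ) (g : Fin n → G) (z : Fin n → ℂ),
    0 ≤ ∑ i, ∑ j, conj (z i) * z j * φ ((g i)⁻¹ * g j)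

/-- A function `ψ : G → ℂ` is conditionally positive definite if
`∑ᵢⱼ conj(zᵢ) zⱼ ψ(gᵢ⁻¹ gⱼ) ≥ 0` whenever `∑ᵢ zᵢ = 0`. -/
def IsCondPosDefFn {G : Type*} [Group G] (ψ : G → ℂ) : Prop :=
  ∀ (n : ℕ) (g : Fin n → G) (z : Fin n → ℂ), (∑ i, z i) = 0 →
    0 ≤ ∑ i, ∑ j, conj (z i) * z j * ψ ((g i)⁻¹ * g j)

open Matrix Finset

namespace Matrix

variable {ι : Type*}

theorem star_dotProduct_mulVec_eq_sum [Fintype ι] (M : Matrix ι ι ℂ) (x : ι → ℂ) :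
    star x ⬝ᵥ (M *ᵥ x) = ∑ i, ∑ j, conj (x i) * x j * M i j := by
  simp only [dotProduct, mulVec, Pi.star_apply, mul_sum, RCLike.star_def]
  exact sum_congr rfl fun i _ => sum_congr rfl fun j _ => by ring

theorem PosSemidef.map_pow {𝕜 : Type*} [RCLike 𝕜] [Finite ι] {A : Matrix ι ι 𝕜}
    (hA : A.PosSemidef) (k : ℕ) : (A.map (· ^ k)).PosSemidef := by
  induction k with
  | zero => simpa [vecMulVec, Matrix.map] using posSemidef_vecMulVec_self_star (1 : ι → 𝕜)
  | succ k ih =>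
    convert ih.hadamard hA using 1
    ext i j
    simp [pow_succ]

theorem PosSemidef.map_exp [Fintype ι] {A : Matrix ι ι ℂ} (hA : A.PosSemidef) :
    (A.map Complex.exp).PosSemidef := by
  refine .of_dotProduct_mulVec_nonneg ?_ fun x => ?_
  · ext i j
    simp [← Complex.exp_conj, ← hA.isHermitian.apply i j]
  have hseries : HasSum (fun k => star x ⬝ᵥ (A.map (· ^ k) *ᵥ x) / k.factorial)
      (star x ⬝ᵥ (A.map Complex.exp *ᵥ x)) := by
    simp only [star_dotProduct_mulVec_eq_sum, map_apply, sum_div, mul_div_assoc]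
    refine hasSum_sum fun i _ => hasSum_sum fun j _ => ?_
    rw [Complex.exp_eq_exp_ℂ]
    exact (NormedSpace.expSeries_div_hasSum_exp (A i j)).mul_left _
  exact hseries.nonneg fun k =>
    div_nonneg ((hA.map_pow k).dotProduct_mulVec_nonneg x) (Nat.cast_nonneg _)

end Matrix

section Group

variable {G : Type*} [Group G]

theorem isPosDefFn_of_posSemidef {φ : G → ℂ}
    (h : ∀ n (g : Fin n → G), (of fun i j => φ ((g i)⁻¹ * g j)).PosSemidef) :
    IsPosDefFn φ := fun n g z => by
  simpa [star_dotProduct_mulVec_eq_sum] using (h n g).dotProduct_mulVec_nonneg z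

def condPosDefKernel (ψ : G → ℂ) {n : ℕ} (g : Fin n → G) : Matrix (Fin n) (Fin n) ℂ :=
  of fun i j => ψ ((g i)⁻¹ * g j) - ψ (g i)⁻¹ - ψ (g j) + ψ 1

theorem star_dotProduct_condPosDefKernel_mulVec (ψ : G → ℂ) {n : ℕ} (g : Fin n → G)
    (x : Fin n → ℂ) :
    star x ⬝ᵥ (condPosDefKernel ψ g *ᵥ x) =
      ∑ i, ∑ j, conj ((Fin.cons (-∑ k, x k) x : Fin (n + 1) → ℂ) i) *
        (Fin.cons (-∑ k, x k) x : Fin (n + 1) → ℂ) j *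
        ψ (((Fin.cons 1 g : Fin (n + 1) → G) i)⁻¹ * (Fin.cons 1 g : Fin (n + 1) → G) j) := by
  simp only [star_dotProduct_mulVec_eq_sum, condPosDefKernel, of_apply, Fin.sum_univ_succ,
    Fin.cons_zero, Fin.cons_succ, inv_one, one_mul, mul_one, map_neg, map_sum, mul_add, mul_sub,
    sum_add_distrib, sum_sub_distrib, sum_mul, mul_sum, neg_mul, mul_neg, sum_neg_distrib]
  rw [sum_comm (f := fun i j => conj (x j) * x i * ψ (g i)),
    sum_comm (f := fun i j => conj (x j) * x i * ψ 1)]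
  ring

end Group

namespace IsCondPosDefFn

variable {G : Type*} [Group G] {ψ : G → ℂ}

theorem const_mul (hψ : IsCondPosDefFn ψ) {c : ℂ} (hc : 0 ≤ c) :
    IsCondPosDefFn (fun g => c * ψ g) := fun n g z hz => by
  simpa only [mul_sum, mul_left_comm c] using mul_nonneg hc (hψ n g z hz)

theorem posSemidef_condPosDefKernel (hψ : IsCondPosDefFn ψ)
    (hherm : ∀ g, ψ g⁻¹ = conj (ψ g)) {n : ℕ} (g : Fin n → G) :
    (condPosDefKernel ψ g).PosSemidef := by
  refine .of_dotProduct_mulVec_nonneg ?_ fun x => ?_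
  · ext i j
    simp only [condPosDefKernel, conjTranspose_apply, of_apply, RCLike.star_def, map_add, map_sub,
      ← hherm, _root_.mul_inv_rev, inv_inv, inv_one]
    ring
  · rw [star_dotProduct_condPosDefKernel_mulVec]
    exact hψ _ _ _ (by simp [Fin.sum_univ_succ])

theorem isPosDefFn_exp (hψ : IsCondPosDefFn ψ)
    (hherm : ∀ g, ψ g⁻¹ = conj (ψ g)) : IsPosDefFn (fun g => Complex.exp (ψ g)) := by
  have hψ1 : ((ψ 1).re : ℂ) = ψ 1 := Complex.conj_eq_iff_re.mp (by simpa using (hherm 1).symm)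
  refine isPosDefFn_of_posSemidef fun n g => ?_
  let D : Matrix (Fin n) (Fin n) ℂ := diagonal fun i => Complex.exp (ψ (g i))
  convert ((hψ.posSemidef_condPosDefKernel hherm g).map_exp.conjTranspose_mul_mul_same D).smul
    (Real.exp_pos (-(ψ 1).re)).le using 1
  ext i j
  simp only [D, condPosDefKernel, of_apply, Matrix.smul_apply, diagonal_conjTranspose,
    mul_diagonal, diagonal_mul, map_apply, Pi.star_apply, RCLike.star_def, ← Complex.exp_conj,
    ← hherm, Complex.real_smul, Complex.ofReal_exp, Complex.ofReal_neg, hψ1, ← Complex.exp_add]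
  congr 1
  ring

end IsCondPosDefFn

theorem schoenberg_exp_positive_definite_general
    {G : Type*} [Group G] [TopologicalSpace G]
    (ψ : G → ℂ)
    (hcont : Continuous ψ)
    (hherm : ∀ g : G, ψ g⁻¹ = conj (ψ g))
    (hcpd : IsCondPosDefFn ψ)
    (hψe : ψ 1 = 0) :
    ∀ t : ℝ, 0 ≤ t →
      Continuous (fun g => Complex.exp ((t : ℂ) * ψ g)) ∧
      IsPosDefFn (fun g => Complex.exp ((t : ℂ) * ψ g)) ∧
      Complex.exp ((t : ℂ) * ψ 1) = 1 := by
  intro t ht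
  have htψ : IsCondPosDefFn (fun g => (t : ℂ) * ψ g) :=
    hcpd.const_mul (Complex.zero_le_real.mpr ht)
  refine ⟨by fun_prop, htψ.isPosDefFn_exp fun g => ?_, by simp [hψe]⟩
  simp [hherm]

/-- Schönberg correspondence. Let `G` be a compact group and
`ψ : G → ℂ` a continuous, Hermitian, conditionally positive-definite function
with `ψ(e) = 0`.  Then for each `t ≥ 0` the function `g ↦ exp(t ψ(g))` is a
continuous positive-definite function on `G`, equal to `1` at `e`. -/
theorem schoenberg_exp_positive_definite
    {G : Type*} [Group G] [TopologicalSpace G] [IsTopologicalGroup G] [CompactSpace G]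
    (ψ : G → ℂ)
    (hcont : Continuous ψ)
    (hherm : ∀ g : G, ψ g⁻¹ = conj (ψ g))
    (hcpd : IsCondPosDefFn ψ)
    (hψe : ψ 1 = 0) :
    ∀ t : ℝ, 0 ≤ t →
      Continuous (fun g => Complex.exp ((t : ℂ) * ψ g)) ∧
      IsPosDefFn (fun g => Complex.exp ((t : ℂ) * ψ g)) ∧
      Complex.exp ((t : ℂ) * ψ 1) = 1 :=
  schoenberg_exp_positive_definite_general ψ hcont hherm hcpd hψe
end

section
/- Let G be a compact group and ψ : G → ℂ a continuous, Hermitian, conditionally positive-definite function with ψ(e) = 0. Then there exists a continuous positive-definite function φ on G such that ψ(g) = φ(g) − φ(e) for all g ∈ G; equivalently, there is a constant c ∈ ℝ≥0 such that ψ + c is positive-definite. -/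
open scoped ComplexOrder ComplexConjugate

open Finset MeasureTheory

/-!
Test conditional positive-definiteness on the points `g₁, …, gₙ, x` with weights
`z₁, …, zₙ, -∑ zᵢ`, then average over `x` with respect to a left-invariant probability measure
(normalized Haar measure on a compact group). Left invariance turns every cross term into
`∫ ψ`, which leaves `∑ᵢⱼ conj zᵢ zⱼ ψ(gᵢ⁻¹ gⱼ) ≥ 2 |∑ zᵢ|² Re ∫ ψ`; that is, `ψ + c` is
positive-definite for `c = -2 Re ∫ ψ`, and `c ≥ 0` because `Re ψ ≤ 0`.
-/

section QuadForm

variable {G : Type*} [Group G]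

def quadForm (ψ : G → ℂ) {n : ℕ} (g : Fin n → G) (z : Fin n → ℂ) : ℂ :=
  ∑ i, ∑ j, conj (z i) * z j * ψ ((g i)⁻¹ * g j)

lemma isPosDefFn_iff_quadForm_nonneg {φ : G → ℂ} :
    IsPosDefFn φ ↔ ∀ (n : ℕ) (g : Fin n → G) (z : Fin n → ℂ), 0 ≤ quadForm φ g z :=
  Iff.rfl

lemma quadForm_add_const (ψ : G → ℂ) (c : ℂ) {n : ℕ} (g : Fin n → G) (z : Fin n → ℂ) :
    quadForm (fun x => ψ x + c) g z = quadForm ψ g z + c * Complex.normSq (∑ i, z i) := by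
  simp only [quadForm, mul_add, sum_add_distrib]
  rw [Complex.normSq_eq_conj_mul_self, map_sum, sum_mul_sum, mul_sum]
  exact congrArg _ (sum_congr rfl fun i _ => by rw [mul_sum]; exact sum_congr rfl fun j _ => by ring)

lemma quadForm_snoc (ψ : G → ℂ) {n : ℕ} (g : Fin n → G) (z : Fin n → ℂ) (x : G) (w : ℂ) :
    quadForm ψ (Fin.snoc g x : Fin (n + 1) → G) (Fin.snoc z w : Fin (n + 1) → ℂ) =
      quadForm ψ g z + w * ∑ i, conj (z i) * ψ ((g i)⁻¹ * x)
        + conj w * ∑ j, z j * ψ (x⁻¹ * g j) + conj w * w * ψ 1 := by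
  simp only [quadForm, Fin.sum_univ_castSucc, Fin.snoc_castSucc, Fin.snoc_last, inv_mul_cancel,
    sum_add_distrib, mul_sum, mul_assoc, mul_left_comm w]
  ring

lemma conj_quadForm {ψ : G → ℂ} (hherm : ∀ g, ψ g⁻¹ = conj (ψ g)) {n : ℕ} (g : Fin n → G)
    (z : Fin n → ℂ) : conj (quadForm ψ g z) = quadForm ψ g z := by
  conv_rhs => rw [quadForm, Finset.sum_comm]
  simp only [quadForm, map_sum, map_mul, Complex.conj_conj, ← hherm, mul_inv_rev, inv_inv]
  exact sum_congr rfl fun i _ => sum_congr rfl fun j _ => by ring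

lemma integral_sum_conj_mul_translate [MeasurableSpace G] [MeasurableMul G] {μ : Measure G}
    [μ.IsMulLeftInvariant] {ψ : G → ℂ} (hint : Integrable ψ μ) {n : ℕ} (g : Fin n → G)
    (z : Fin n → ℂ) :
    ∫ x, ∑ i, conj (z i) * ψ ((g i)⁻¹ * x) ∂μ = conj (∑ i, z i) * ∫ x, ψ x ∂μ := by
  rw [integral_finsetSum _ fun i _ => (hint.comp_mul_left _).const_mul _]
  simp only [integral_const_mul, integral_mul_left_eq_self, map_sum, sum_mul]

end QuadForm

namespace IsCondPosDefFn

variable {G : Type*} [Group G] {ψ : G → ℂ}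

lemma re_nonpos (hcpd : IsCondPosDefFn ψ) (hherm : ∀ g, ψ g⁻¹ = conj (ψ g)) (hψ1 : ψ 1 = 0)
    (x : G) : (ψ x).re ≤ 0 := by
  have h := (Complex.nonneg_iff.mp (hcpd 2 ![1, x] ![1, -1] (by simp))).1
  simp [Fin.sum_univ_two, hψ1, hherm] at h
  linarith

lemma two_mul_re_le_re_quadForm (hcpd : IsCondPosDefFn ψ) (hherm : ∀ g, ψ g⁻¹ = conj (ψ g))
    (hψ1 : ψ 1 = 0) {n : ℕ} (g : Fin n → G) (z : Fin n → ℂ) (x : G) :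
    2 * ((∑ i, z i) * ∑ i, conj (z i) * ψ ((g i)⁻¹ * x)).re ≤ (quadForm ψ g z).re := by
  set S := ∑ i, z i
  have hsum : ∑ i, (Fin.snoc z (-S) : Fin (n + 1) → ℂ) i = 0 := by
    simp [Fin.sum_univ_castSucc, S]
  have h := hcpd (n + 1) (Fin.snoc g x) (Fin.snoc z (-S)) hsum
  have hmirror : conj (-S) * ∑ j, z j * ψ (x⁻¹ * g j) =
      -conj (S * ∑ i, conj (z i) * ψ ((g i)⁻¹ * x)) := by
    simp only [map_neg, map_mul, map_sum, Complex.conj_conj, ← hherm, mul_inv_rev, inv_inv,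
      neg_mul]
  rw [← quadForm, quadForm_snoc, hψ1, mul_zero, add_zero, hmirror, neg_mul] at h
  have := (Complex.nonneg_iff.mp h).1
  simp only [Complex.add_re, Complex.neg_re, Complex.conj_re] at this
  linarith

theorem isPosDefFn_add_const [MeasurableSpace G] [MeasurableMul G] (μ : Measure G)
    [μ.IsMulLeftInvariant] [IsProbabilityMeasure μ] (hint : Integrable ψ μ)
    (hcpd : IsCondPosDefFn ψ) (hherm : ∀ g, ψ g⁻¹ = conj (ψ g)) (hψ1 : ψ 1 = 0) :
    IsPosDefFn fun x => ψ x + ((-2 * (∫ x, ψ x ∂μ).re : ℝ) : ℂ) := by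
  refine isPosDefFn_iff_quadForm_nonneg.mpr fun n g z => ?_
  set S := ∑ i, z i
  set a := ∫ x, ψ x ∂μ
  have hT : Integrable (fun x => S * ∑ i, conj (z i) * ψ ((g i)⁻¹ * x)) μ :=
    (integrable_finsetSum _ fun i _ => (hint.comp_mul_left _).const_mul _).const_mul S
  have hre : ∫ x, (S * ∑ i, conj (z i) * ψ ((g i)⁻¹ * x)).re ∂μ =
      (∫ x, S * ∑ i, conj (z i) * ψ ((g i)⁻¹ * x) ∂μ).re :=
    integral_re hT
  have hbound : 2 * Complex.normSq S * a.re ≤ (quadForm ψ g z).re :=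
    calc 2 * Complex.normSq S * a.re
        = ∫ x, 2 * (S * ∑ i, conj (z i) * ψ ((g i)⁻¹ * x)).re ∂μ := by
          rw [integral_const_mul, hre, integral_const_mul,
            integral_sum_conj_mul_translate hint, ← mul_assoc, Complex.mul_conj,
            Complex.re_ofReal_mul, mul_assoc]
      _ ≤ ∫ _, (quadForm ψ g z).re ∂μ :=
          integral_mono (hT.re.const_mul 2) (integrable_const _)
            fun x => two_mul_re_le_re_quadForm hcpd hherm hψ1 g z x
      _ = (quadForm ψ g z).re := by simp
  rw [quadForm_add_const, ← Complex.conj_eq_iff_re.mp (conj_quadForm hherm g z),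
    ← Complex.ofReal_mul, ← Complex.ofReal_add, Complex.zero_le_real]
  linarith

end IsCondPosDefFn

/-- Guichardet. Let `G` be a compact group and `ψ : G → ℂ` a
continuous, Hermitian, conditionally positive-definite function with
`ψ(e) = 0`.  Then there is a continuous positive-definite function `φ` on `G`
with `ψ(g) = φ(g) − φ(e)` for all `g`; equivalently, there is `c ∈ ℝ≥0` such
that `ψ + c` is positive-definite. -/
theorem guichardet
    {G : Type*} [Group G] [TopologicalSpace G] [IsTopologicalGroup G] [CompactSpace G]
    (ψ : G → ℂ)
    (hcont : Continuous ψ)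
    (hherm : ∀ g : G, ψ g⁻¹ = conj (ψ g))
    (hcpd : IsCondPosDefFn ψ)
    (hψe : ψ 1 = 0) :
    (∃ φ : G → ℂ, Continuous φ ∧ IsPosDefFn φ ∧ ∀ g : G, ψ g = φ g - φ 1) ∧
    (∃ c : ℝ, 0 ≤ c ∧ IsPosDefFn (fun g => ψ g + (c : ℂ))) := by
  borelize G
  let μ := Measure.haarMeasure (⊤ : TopologicalSpace.PositiveCompacts G)
  have : IsProbabilityMeasure μ :=
    ⟨by simpa using Measure.haarMeasure_self (K₀ := (⊤ : TopologicalSpace.PositiveCompacts G))⟩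
  have hint : Integrable ψ μ :=
    hcont.integrable_of_hasCompactSupport (HasCompactSupport.of_compactSpace ψ)
  have hc : 0 ≤ -2 * (∫ x, ψ x ∂μ).re := by
    have hre : ∫ x, (ψ x).re ∂μ = (∫ x, ψ x ∂μ).re := integral_re hint
    linarith [integral_nonpos (μ := μ) fun x => hcpd.re_nonpos hherm hψe x]
  have hpd := hcpd.isPosDefFn_add_const μ hint hherm hψe
  exact ⟨⟨_, hcont.add continuous_const, hpd, fun g => by simp [hψe]⟩, ⟨_, hc, hpd⟩⟩
end
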